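/- Define u : [0,T]×ℝⁿ → ℝⁿ by u(t,x) := Y^{t,x}(t). Then there exist constants α, β > 0, independent of the arguments, such that |u(t,x) − u(t',x')|² ≤ α|x−x'|² + β(1+|x|²)|t−t'| for all t,t' ∈ [0,T] and x,x' ∈ ℝⁿ. In particular u is Lipschitz continuous in x uniformly in t, and uniformly continuous in t on bounded sets of x. (Regularity of the limit function u, claim 3 of Theorem 2 of the paper.) -/

import Mathlib

/-!
For two solutions started at time `t`, write `P = X - X'`, `Q = Y - Y'`. Integrating
`d⟪P, Q⟫ = ⟪P', Q⟫ + ⟪P, Q'⟫` over `[t, T]` and using both monotonicity conditions gives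
`C₂ (‖P T‖² + ∫ ‖P‖² + ‖Q‖²) ≤ ‖P t‖ ‖Q t‖`. The backward equation bounds `‖Q t‖` by `‖P T‖` and
`∫ ‖P‖ + ‖Q‖`, which Cauchy–Schwarz controls by `∫ ‖P‖² + ‖Q‖²`; solving the resulting quadratic
inequality gives `sup (‖P‖ + ‖Q‖) ≤ K ‖x - x'‖`, so `u` is Lipschitz in `x`. The same computation
with `(X', Y') = (0, 0)` gives `‖X‖ + ‖Y‖ ≤ K (M + ‖x‖)`, where `M` bounds `f`, `g` at `(r, 0, 0)`
and `h` at `0`; hence `f` and `g` are `O(1 + ‖x‖)` along solutions. For `t ≤ t'`, uniqueness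
gives the flow property `Y^{t,x}(t') = u(t', X^{t,x}(t'))`, so `‖u(t,x) - u(t',x)‖ ≤ ‖Y(t) - Y(t')‖ + K ‖X(t') - x‖`
is `O((1 + ‖x‖)(t' - t))`; squaring and `|t - t'| ≤ T` give the estimate.
-/

open MeasureTheory Set intervalIntegral RealInnerProductSpace

noncomputable section

/-- `ℝⁿ` as a real inner product space. -/
abbrev Vec (n : ℕ) := EuclideanSpace ℝ (Fin n)

/-- A solution of the (deterministic) forward–backward system with data `(t, x)`:
a pair of maps `X, Y`, continuous on `[t, T]`, satisfying
`X s = x + ∫_t^s f r (X r) (Y r) dr` and `Y s = h (X T) + ∫_s^T g r (X r) (Y r) dr`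
for all `s ∈ [t, T]`. -/
def IsFBSol {n : ℕ} (T : ℝ)
    (f g : ℝ → Vec n → Vec n → Vec n) (h : Vec n → Vec n)
    (t : ℝ) (x : Vec n) (X Y : ℝ → Vec n) : Prop :=
  ContinuousOn X (Icc t T) ∧ ContinuousOn Y (Icc t T) ∧
  (∀ s ∈ Icc t T, X s = x + ∫ r in t..s, f r (X r) (Y r)) ∧
  (∀ s ∈ Icc t T, Y s = h (X T) + ∫ r in s..T, g r (X r) (Y r))

open Topology

theorem le_of_sq_le_mul_mul_add {R N A : ℝ} (hN : 0 ≤ N) (hA : 0 ≤ A)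
    (h : R ^ 2 ≤ A * N * (N + R)) : R ≤ (1 + 2 * A) * N := by
  by_contra! hlt
  nlinarith [mul_nonneg hA hN, mul_nonneg (mul_nonneg hA hN) hN]

theorem add_le_of_energy_estimates {C₁ C₂ D m p a w S I τ : ℝ} (hC₁ : 0 ≤ C₁) (hC₂ : 0 < C₂)
    (hm : 0 ≤ m) (hp : 0 ≤ p) (ha : 0 ≤ a) (hS : 0 ≤ S) (hI : 0 ≤ I) (hτ : 0 ≤ τ) (hτD : τ ≤ D)
    (henergy : C₂ * a ^ 2 + C₂ * I ≤ p * w + m * a + m * S)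
    (hw : w ≤ m + C₁ * a + m * τ + C₁ * S) (hCS : S ^ 2 ≤ 2 * τ * I) :
    a + S ≤ (1 + 4 * (1 + 2 * D) * (2 + D + C₁) / C₂) * (m + p) := by
  have hD : 0 ≤ D := hτ.trans hτD
  have hN : 0 ≤ m + p := add_nonneg hm hp
  have hR : 0 ≤ a + S := add_nonneg ha hS
  have hpw : p * w ≤ (1 + D) * (m + p) ^ 2 + C₁ * (m + p) * (a + S) := by
    have hw' : p * w ≤ p * m + p * m * D + C₁ * p * a + C₁ * p * S := by
      nlinarith [mul_le_mul_of_nonneg_left hτD (mul_nonneg hp hm)]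
    nlinarith [mul_nonneg hm hp, mul_nonneg hD (mul_nonneg hm hp), mul_nonneg hD (sq_nonneg m),
      mul_nonneg hD (sq_nonneg p), mul_nonneg hC₁ (mul_nonneg hm ha),
      mul_nonneg hC₁ (mul_nonneg hm hS)]
  have hS2 : C₂ * S ^ 2 ≤ 2 * D * (C₂ * I) := by
    nlinarith [mul_le_mul_of_nonneg_left hτD (mul_nonneg hC₂.le hI)]
  have hquad :
      C₂ * (a + S) ^ 2 ≤ (2 * (1 + 2 * D) * (2 + D + C₁)) * (m + p) * (m + p + (a + S)) :=
    calc C₂ * (a + S) ^ 2 ≤ 2 * (C₂ * a ^ 2) + 2 * (C₂ * S ^ 2) := by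
          nlinarith [mul_nonneg hC₂.le (sq_nonneg (a - S))]
      _ ≤ (2 + 4 * D) * (C₂ * a ^ 2 + C₂ * I) := by
          nlinarith [mul_nonneg hD (mul_nonneg hC₂.le (sq_nonneg a))]
      _ ≤ (2 + 4 * D) * ((1 + D) * (m + p) ^ 2 + (C₁ + 1) * (m + p) * (a + S)) := by
          refine mul_le_mul_of_nonneg_left ?_ (by positivity)
          nlinarith [mul_nonneg hp ha, mul_nonneg hp hS]
      _ ≤ _ := by
          nlinarith [mul_nonneg hN hR, mul_nonneg hD (mul_nonneg hN hR),
            mul_nonneg (mul_nonneg hD hD) (mul_nonneg hN hR),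
            mul_nonneg (mul_nonneg hD hC₁) (sq_nonneg (m + p)), mul_nonneg hC₁ (sq_nonneg (m + p))]
  have hR2 :
      (a + S) ^ 2 ≤ (2 * (1 + 2 * D) * (2 + D + C₁) / C₂) * (m + p) * (m + p + (a + S)) := by
    rw [div_mul_eq_mul_div, div_mul_eq_mul_div, le_div_iff₀ hC₂]
    linarith
  exact (le_of_sq_le_mul_mul_add hN (by positivity) hR2).trans_eq (by ring)

theorem sq_le_of_le_mul_add_mul {d e ξ τ T A L : ℝ} (hd : 0 ≤ d) (hτ : 0 ≤ τ)
    (hτT : τ ≤ T) (h : d ≤ A * (1 + ξ) * τ + L * e) :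
    d ^ 2 ≤ (2 * L ^ 2 + 1) * e ^ 2 + (4 * T * A ^ 2 + 1) * (1 + ξ ^ 2) * τ := by
  have h1 : d ^ 2 ≤ 2 * ((A * (1 + ξ) * τ) ^ 2 + (L * e) ^ 2) :=
    (pow_le_pow_left₀ hd h 2).trans add_sq_le
  have h2 : (1 + ξ) ^ 2 ≤ 2 * (1 + ξ ^ 2) := by nlinarith [add_sq_le (a := 1) (b := ξ)]
  have h3 : (A * (1 + ξ) * τ) ^ 2 ≤ A ^ 2 * (2 * (1 + ξ ^ 2)) * (T * τ) := by
    rw [mul_pow, mul_pow]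
    gcongr
    nlinarith
  nlinarith [sq_nonneg e, mul_nonneg (add_nonneg zero_le_one (sq_nonneg ξ)) hτ]

theorem sq_integral_le_mul_integral_sq {a b : ℝ} (hab : a ≤ b) {φ : ℝ → ℝ}
    (hφ : ContinuousOn φ (Icc a b)) :
    (∫ r in a..b, φ r) ^ 2 ≤ (b - a) * ∫ r in a..b, φ r ^ 2 := by
  set S := ∫ r in a..b, φ r
  rcases hab.eq_or_lt with rfl | hlt
  · simp [S]
  -- integrate `2 c φ ≤ φ² + c²`, then take `c = S / (b - a)`
  have key : ∀ c : ℝ, 2 * c * S ≤ (∫ r in a..b, φ r ^ 2) + c ^ 2 * (b - a) := by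
    intro c
    have hsq : ContinuousOn (fun r => φ r ^ 2) (Icc a b) := hφ.pow 2
    have hmono := integral_mono_on (f := fun r => 2 * c * φ r) (g := fun r => φ r ^ 2 + c ^ 2)
      hab ((hφ.intervalIntegrable_of_Icc (μ := volume) hab).const_mul (2 * c))
      ((hsq.add continuousOn_const).intervalIntegrable_of_Icc hab)
      (fun r _ => by nlinarith [sq_nonneg (φ r - c)])
    rwa [intervalIntegral.integral_const_mul,
      intervalIntegral.integral_add (hsq.intervalIntegrable_of_Icc hab) intervalIntegrable_const,
      intervalIntegral.integral_const, smul_eq_mul, mul_comm (b - a)] at hmono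
  have hba : 0 < b - a := sub_pos.2 hlt
  have := key (S / (b - a))
  field_simp at this
  nlinarith

theorem norm_integral_le_integral_of_subinterval {E : Type*} [NormedAddCommGroup E]
    [NormedSpace ℝ E] {t u v T : ℝ} {H : ℝ → E} {φ : ℝ → ℝ}
    (htu : t ≤ u) (huv : u ≤ v) (hvT : v ≤ T) (hφ : ContinuousOn φ (Icc t T))
    (hφ0 : ∀ r ∈ Icc t T, 0 ≤ φ r) (hH : ∀ r ∈ Icc t T, ‖H r‖ ≤ φ r) :
    ‖∫ r in u..v, H r‖ ≤ ∫ r in t..T, φ r := by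
  have hsub : Icc u v ⊆ Icc t T := Icc_subset_Icc htu hvT
  calc ‖∫ r in u..v, H r‖ ≤ ∫ r in u..v, φ r :=
        norm_integral_le_of_norm_le huv
          (Filter.Eventually.of_forall fun r hr => hH r (hsub (Ioc_subset_Icc_self hr)))
          ((hφ.mono hsub).intervalIntegrable_of_Icc huv)
    _ ≤ ∫ r in t..T, φ r :=
        integral_mono_interval htu huv hvT
          ((ae_restrict_iff' measurableSet_Ioc).2 (Filter.Eventually.of_forall
            fun r hr => hφ0 r (Ioc_subset_Icc_self hr)))
          (hφ.intervalIntegrable_of_Icc (htu.trans (huv.trans hvT)))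

theorem sq_integral_norm_add_norm_le {E : Type*} [SeminormedAddCommGroup E] {t T : ℝ}
    {P Q : ℝ → E} (htT : t ≤ T) (hP : ContinuousOn P (Icc t T)) (hQ : ContinuousOn Q (Icc t T)) :
    (∫ r in t..T, (‖P r‖ + ‖Q r‖)) ^ 2 ≤ 2 * (T - t) * ∫ r in t..T, (‖P r‖ ^ 2 + ‖Q r‖ ^ 2) := by
  have hφ : ContinuousOn (fun r => ‖P r‖ + ‖Q r‖) (Icc t T) := hP.norm.add hQ.norm
  have hψ : ContinuousOn (fun r => ‖P r‖ ^ 2 + ‖Q r‖ ^ 2) (Icc t T) :=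
    (hP.norm.pow 2).add (hQ.norm.pow 2)
  have hsq : ∫ r in t..T, (‖P r‖ + ‖Q r‖) ^ 2 ≤ ∫ r in t..T, 2 * (‖P r‖ ^ 2 + ‖Q r‖ ^ 2) :=
    integral_mono_on htT ((hφ.pow 2).intervalIntegrable_of_Icc htT)
      ((hψ.intervalIntegrable_of_Icc htT).const_mul 2)
      fun r _ => by nlinarith [sq_nonneg (‖P r‖ - ‖Q r‖)]
  rw [intervalIntegral.integral_const_mul] at hsq
  nlinarith [sq_integral_le_mul_integral_sq htT hφ,
    mul_le_mul_of_nonneg_left hsq (sub_nonneg.2 htT)]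

/-- The factor `1 + 4 (1 + 2D)(2 + D + C₁) / C₂` bounds `‖P T‖ + ∫ ‖P‖ + ‖Q‖` in
`add_le_of_energy_estimates`; the rest comes from integrating the growth bounds of `F` and `G`. -/
def fbBound (C₁ C₂ D : ℝ) : ℝ := 1 + 2 * D + 2 * C₁ * (1 + 4 * (1 + 2 * D) * (2 + D + C₁) / C₂)

theorem fbBound_nonneg {C₁ C₂ D : ℝ} (hC₁ : 0 ≤ C₁) (hC₂ : 0 < C₂) (hD : 0 ≤ D) :
    0 ≤ fbBound C₁ C₂ D := by
  unfold fbBound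
  positivity

section ForwardBackwardPair

variable {E : Type*} [NormedAddCommGroup E] [InnerProductSpace ℝ E] [CompleteSpace E]
  {t T m C₁ C₂ : ℝ} {P Q F G : ℝ → E}

theorem inner_sub_inner_eq_integral (htT : t ≤ T)
    (hP : ContinuousOn P (Icc t T)) (hQ : ContinuousOn Q (Icc t T))
    (hF : ContinuousOn F (Icc t T)) (hG : ContinuousOn G (Icc t T))
    (hPeq : ∀ s ∈ Icc t T, P s = P t + ∫ r in t..s, F r)
    (hQeq : ∀ s ∈ Icc t T, Q s = Q T + ∫ r in s..T, G r) :
    ⟪P T, Q T⟫ - ⟪P t, Q t⟫ = ∫ r in t..T, (⟪F r, Q r⟫ - ⟪P r, G r⟫) := by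
  have hderiv : ∀ s ∈ Ioo t T,
      HasDerivAt (fun u => ⟪P u, Q u⟫) (⟪F s, Q s⟫ - ⟪P s, G s⟫) s := by
    intro s hs
    have hIcc : Icc t T ∈ 𝓝 s := Icc_mem_nhds hs.1 hs.2
    have hPd : HasDerivAt P (F s) s :=
      ((integral_hasDerivAt_right
          (hF.mono (uIcc_subset_Icc (left_mem_Icc.2 htT)
            (Ioo_subset_Icc_self hs))).intervalIntegrable
          ((hF.mono Ioo_subset_Icc_self).stronglyMeasurableAtFilter isOpen_Ioo s hs)
          (hF.continuousAt hIcc)).const_add (P t)).congr_of_eventuallyEq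
        (Filter.eventually_of_mem hIcc hPeq)
    have hQd : HasDerivAt Q (-G s) s :=
      ((integral_hasDerivAt_left
          (hG.mono (uIcc_subset_Icc (Ioo_subset_Icc_self hs)
            (right_mem_Icc.2 htT))).intervalIntegrable
          ((hG.mono Ioo_subset_Icc_self).stronglyMeasurableAtFilter isOpen_Ioo s hs)
          (hG.continuousAt hIcc)).const_add (Q T)).congr_of_eventuallyEq
        (Filter.eventually_of_mem hIcc hQeq)
    refine (hPd.inner ℝ hQd).congr_deriv ?_
    rw [inner_neg_right]
    ring
  have hcont : ContinuousOn (fun r => ⟪F r, Q r⟫ - ⟪P r, G r⟫) (Icc t T) :=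
    (hF.inner hQ).sub (hP.inner hG)
  exact (integral_eq_sub_of_hasDerivAt_of_le htT (hP.inner hQ) hderiv
    (hcont.intervalIntegrable_of_Icc htT)).symm

theorem energy_inequality (htT : t ≤ T)
    (hP : ContinuousOn P (Icc t T)) (hQ : ContinuousOn Q (Icc t T))
    (hF : ContinuousOn F (Icc t T)) (hG : ContinuousOn G (Icc t T))
    (hPeq : ∀ s ∈ Icc t T, P s = P t + ∫ r in t..s, F r)
    (hQeq : ∀ s ∈ Icc t T, Q s = Q T + ∫ r in s..T, G r)
    (hmono : ∀ r ∈ Icc t T,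
      ⟪F r, Q r⟫ - ⟪P r, G r⟫ ≤ m * (‖P r‖ + ‖Q r‖) - C₂ * (‖P r‖ ^ 2 + ‖Q r‖ ^ 2))
    (hmonoT : C₂ * ‖P T‖ ^ 2 ≤ ⟪P T, Q T⟫ + m * ‖P T‖) :
    C₂ * ‖P T‖ ^ 2 + C₂ * ∫ r in t..T, (‖P r‖ ^ 2 + ‖Q r‖ ^ 2)
      ≤ ‖P t‖ * ‖Q t‖ + m * ‖P T‖ + m * ∫ r in t..T, (‖P r‖ + ‖Q r‖) := by
  have hφ : ContinuousOn (fun r => ‖P r‖ + ‖Q r‖) (Icc t T) := hP.norm.add hQ.norm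
  have hψ : ContinuousOn (fun r => ‖P r‖ ^ 2 + ‖Q r‖ ^ 2) (Icc t T) :=
    (hP.norm.pow 2).add (hQ.norm.pow 2)
  have hinner : ContinuousOn (fun r => ⟪F r, Q r⟫ - ⟪P r, G r⟫) (Icc t T) :=
    (hF.inner hQ).sub (hP.inner hG)
  have hint := integral_mono_on
    (g := fun r => m * (‖P r‖ + ‖Q r‖) - C₂ * (‖P r‖ ^ 2 + ‖Q r‖ ^ 2)) htT
    (hinner.intervalIntegrable_of_Icc (μ := volume) htT)
    (((continuousOn_const.mul hφ).sub (continuousOn_const.mul hψ)).intervalIntegrable_of_Icc htT)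
    hmono
  rw [integral_sub ((hφ.intervalIntegrable_of_Icc htT).const_mul m)
    ((hψ.intervalIntegrable_of_Icc htT).const_mul C₂), intervalIntegral.integral_const_mul,
    intervalIntegral.integral_const_mul,
    ← inner_sub_inner_eq_integral htT hP hQ hF hG hPeq hQeq] at hint
  linarith [real_inner_le_norm (P t) (Q t)]

theorem norm_add_norm_le_of_forward_backward {D : ℝ} (hC₁ : 0 ≤ C₁) (hC₂ : 0 < C₂) (hm : 0 ≤ m)
    (htT : t ≤ T) (hD : T - t ≤ D)
    (hP : ContinuousOn P (Icc t T)) (hQ : ContinuousOn Q (Icc t T))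
    (hF : ContinuousOn F (Icc t T)) (hG : ContinuousOn G (Icc t T))
    (hPeq : ∀ s ∈ Icc t T, P s = P t + ∫ r in t..s, F r)
    (hQeq : ∀ s ∈ Icc t T, Q s = Q T + ∫ r in s..T, G r)
    (hmono : ∀ r ∈ Icc t T,
      ⟪F r, Q r⟫ - ⟪P r, G r⟫ ≤ m * (‖P r‖ + ‖Q r‖) - C₂ * (‖P r‖ ^ 2 + ‖Q r‖ ^ 2))
    (hmonoT : C₂ * ‖P T‖ ^ 2 ≤ ⟪P T, Q T⟫ + m * ‖P T‖)
    (hF_le : ∀ r ∈ Icc t T, ‖F r‖ ≤ m + C₁ * (‖P r‖ + ‖Q r‖))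
    (hG_le : ∀ r ∈ Icc t T, ‖G r‖ ≤ m + C₁ * (‖P r‖ + ‖Q r‖))
    (hQT : ‖Q T‖ ≤ m + C₁ * ‖P T‖) {s : ℝ} (hs : s ∈ Icc t T) :
    ‖P s‖ + ‖Q s‖ ≤ fbBound C₁ C₂ D * (m + ‖P t‖) := by
  set S := ∫ r in t..T, (‖P r‖ + ‖Q r‖)
  set I := ∫ r in t..T, (‖P r‖ ^ 2 + ‖Q r‖ ^ 2)
  have hφ : ContinuousOn (fun r => ‖P r‖ + ‖Q r‖) (Icc t T) := hP.norm.add hQ.norm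
  have hψ : ContinuousOn (fun r => ‖P r‖ ^ 2 + ‖Q r‖ ^ 2) (Icc t T) :=
    (hP.norm.pow 2).add (hQ.norm.pow 2)
  have hS : 0 ≤ S := integral_nonneg htT fun r _ => by positivity
  have hI : 0 ≤ I := integral_nonneg htT fun r _ => by positivity
  have hgrowth : ∫ r in t..T, (m + C₁ * (‖P r‖ + ‖Q r‖)) = m * (T - t) + C₁ * S := by
    rw [integral_add intervalIntegrable_const
      ((hφ.intervalIntegrable_of_Icc htT).const_mul C₁), intervalIntegral.integral_const,
      intervalIntegral.integral_const_mul, smul_eq_mul, mul_comm]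
  have hnorm_int : ∀ {H : ℝ → E} {u v : ℝ}, t ≤ u → u ≤ v → v ≤ T →
      (∀ r ∈ Icc t T, ‖H r‖ ≤ m + C₁ * (‖P r‖ + ‖Q r‖)) →
      ‖∫ r in u..v, H r‖ ≤ m * (T - t) + C₁ * S := fun htu huv hvT hH =>
    hgrowth ▸ norm_integral_le_integral_of_subinterval htu huv hvT
      (continuousOn_const.add (continuousOn_const.mul hφ)) (fun r _ => by positivity) hH
  have hPs : ‖P s‖ ≤ ‖P t‖ + (m * (T - t) + C₁ * S) := by
    rw [hPeq s hs]
    linarith [norm_add_le (P t) (∫ r in t..s, F r), hnorm_int le_rfl hs.1 hs.2 hF_le]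
  have hQs : ∀ u ∈ Icc t T, ‖Q u‖ ≤ m + C₁ * ‖P T‖ + (m * (T - t) + C₁ * S) := by
    intro u hu
    rw [hQeq u hu]
    exact (norm_add_le _ _).trans (add_le_add hQT (hnorm_int hu.1 hu.2 le_rfl hG_le))
  have hR := add_le_of_energy_estimates hC₁ hC₂ hm (norm_nonneg _) (norm_nonneg _) hS hI
    (sub_nonneg.2 htT) hD (energy_inequality htT hP hQ hF hG hPeq hQeq hmono hmonoT)
    (by linarith [hQs t (left_mem_Icc.2 htT)]) (sq_integral_norm_add_norm_le htT hP hQ)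
  have hD0 : 0 ≤ D := (sub_nonneg.2 htT).trans hD
  rw [fbBound]
  linarith [mul_le_mul_of_nonneg_left hR hC₁, mul_le_mul_of_nonneg_left hD hm, hQs s hs,
    mul_nonneg hC₁ (norm_nonneg (P T)), mul_nonneg hD0 (norm_nonneg (P t))]

end ForwardBackwardPair

theorem continuousOn_comp_of_continuousOn_prod {α β γ : Type*} [TopologicalSpace α]
    [TopologicalSpace β] [TopologicalSpace γ] {F : ℝ → α → β → γ} {t T : ℝ}
    {X : ℝ → α} {Y : ℝ → β}
    (hF : ContinuousOn (fun p : ℝ × α × β => F p.1 p.2.1 p.2.2) (Icc 0 T ×ˢ (univ ×ˢ univ)))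
    (ht : 0 ≤ t) (hX : ContinuousOn X (Icc t T)) (hY : ContinuousOn Y (Icc t T)) :
    ContinuousOn (fun r => F r (X r) (Y r)) (Icc t T) :=
  hF.comp (continuousOn_id.prodMk (hX.prodMk hY))
    fun _ hr => ⟨Icc_subset_Icc ht le_rfl hr, trivial, trivial⟩

theorem norm_le_norm_apply_zero_add {E F : Type*} [SeminormedAddCommGroup E]
    [SeminormedAddCommGroup F] {Φ : E → E → F} {C : ℝ}
    (hΦ : ∀ x₁ x₂ y₁ y₂ : E, ‖Φ x₁ y₁ - Φ x₂ y₂‖ ≤ C * (‖x₁ - x₂‖ + ‖y₁ - y₂‖)) (x y : E) :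
    ‖Φ x y‖ ≤ ‖Φ 0 0‖ + C * (‖x‖ + ‖y‖) := by
  have hlip := hΦ x 0 y 0
  simp only [sub_zero] at hlip
  linarith [norm_le_norm_add_norm_sub' (Φ x y) (Φ 0 0)]

theorem abs_real_inner_le_mul_norm_of_norm_le {E : Type*} [NormedAddCommGroup E]
    [InnerProductSpace ℝ E] {a b : E} {M : ℝ} (ha : ‖a‖ ≤ M) : |⟪a, b⟫| ≤ M * ‖b‖ :=
  (abs_real_inner_le_norm a b).trans (mul_le_mul_of_nonneg_right ha (norm_nonneg b))

structure IsMonotoneFBSystem {n : ℕ} (T C₁ C₂ : ℝ) (f g : ℝ → Vec n → Vec n → Vec n)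
    (h : Vec n → Vec n) : Prop where
  f_cont : ContinuousOn (fun p : ℝ × Vec n × Vec n => f p.1 p.2.1 p.2.2)
    (Icc 0 T ×ˢ (univ ×ˢ univ))
  g_cont : ContinuousOn (fun p : ℝ × Vec n × Vec n => g p.1 p.2.1 p.2.2)
    (Icc 0 T ×ˢ (univ ×ˢ univ))
  C₁_nonneg : 0 ≤ C₁
  f_lip : ∀ t ∈ Icc (0:ℝ) T, ∀ x₁ x₂ y₁ y₂ : Vec n,
    ‖f t x₁ y₁ - f t x₂ y₂‖ ≤ C₁ * (‖x₁ - x₂‖ + ‖y₁ - y₂‖)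
  g_lip : ∀ t ∈ Icc (0:ℝ) T, ∀ x₁ x₂ y₁ y₂ : Vec n,
    ‖g t x₁ y₁ - g t x₂ y₂‖ ≤ C₁ * (‖x₁ - x₂‖ + ‖y₁ - y₂‖)
  h_lip : ∀ x₁ x₂ : Vec n, ‖h x₁ - h x₂‖ ≤ C₁ * ‖x₁ - x₂‖
  C₂_pos : 0 < C₂
  mono : ∀ t ∈ Icc (0:ℝ) T, ∀ x₁ x₂ y₁ y₂ : Vec n,
    ⟪-(g t x₁ y₁ - g t x₂ y₂), x₁ - x₂⟫ + ⟪f t x₁ y₁ - f t x₂ y₂, y₁ - y₂⟫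
      ≤ -C₂ * (‖x₁ - x₂‖ ^ 2 + ‖y₁ - y₂‖ ^ 2)
  h_mono : ∀ x₁ x₂ : Vec n, C₂ * ‖x₁ - x₂‖ ^ 2 ≤ ⟪h x₁ - h x₂, x₁ - x₂⟫

theorem IsMonotoneFBSystem.exists_bound_at_zero {n : ℕ} {T C₁ C₂ : ℝ}
    {f g : ℝ → Vec n → Vec n → Vec n} {h : Vec n → Vec n}
    (hA : IsMonotoneFBSystem T C₁ C₂ f g h) :
    ∃ M, 0 ≤ M ∧ (∀ r ∈ Icc 0 T, ‖f r 0 0‖ ≤ M) ∧ (∀ r ∈ Icc 0 T, ‖g r 0 0‖ ≤ M) ∧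
      ‖h 0‖ ≤ M := by
  obtain ⟨Mf, hMf⟩ := isCompact_Icc.exists_bound_of_continuousOn
    (continuousOn_comp_of_continuousOn_prod (X := fun _ => 0) (Y := fun _ => 0) hA.f_cont le_rfl
      continuousOn_const continuousOn_const)
  obtain ⟨Mg, hMg⟩ := isCompact_Icc.exists_bound_of_continuousOn
    (continuousOn_comp_of_continuousOn_prod (X := fun _ => 0) (Y := fun _ => 0) hA.g_cont le_rfl
      continuousOn_const continuousOn_const)
  exact ⟨max (max Mf Mg) ‖h 0‖, (norm_nonneg _).trans (le_max_right _ _),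
    fun r hr => (hMf r hr).trans ((le_max_left _ _).trans (le_max_left _ _)),
    fun r hr => (hMg r hr).trans ((le_max_right _ _).trans (le_max_left _ _)), le_max_right _ _⟩

namespace IsFBSol

variable {n : ℕ} {T C₁ C₂ t : ℝ} {f g : ℝ → Vec n → Vec n → Vec n} {h : Vec n → Vec n}
  {x : Vec n} {X Y : ℝ → Vec n}

theorem forward_start (hsol : IsFBSol T f g h t x X Y) (htT : t ≤ T) : X t = x := by
  rw [hsol.2.2.1 t (left_mem_Icc.2 htT), integral_same, add_zero]

theorem backward_end (hsol : IsFBSol T f g h t x X Y) (htT : t ≤ T) : Y T = h (X T) := by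
  rw [hsol.2.2.2 T (right_mem_Icc.2 htT), integral_same, add_zero]

theorem restrict (hsol : IsFBSol T f g h t x X Y)
    (hf : ContinuousOn (fun r => f r (X r) (Y r)) (Icc t T)) {t' : ℝ} (ht' : t' ∈ Icc t T) :
    IsFBSol T f g h t' (X t') X Y := by
  have hsub : Icc t' T ⊆ Icc t T := Icc_subset_Icc ht'.1 le_rfl
  refine ⟨hsol.1.mono hsub, hsol.2.1.mono hsub, fun s hs => ?_, fun s hs => hsol.2.2.2 s (hsub hs)⟩
  have htT : t ∈ Icc t T := left_mem_Icc.2 (ht'.1.trans ht'.2)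
  rw [hsol.2.2.1 s (hsub hs), hsol.2.2.1 t' ht', add_assoc, integral_add_adjacent_intervals
    (hf.mono (uIcc_subset_Icc htT ht')).intervalIntegrable
    (hf.mono (uIcc_subset_Icc ht' (hsub hs))).intervalIntegrable]

theorem norm_sub_add_norm_sub_le (hA : IsMonotoneFBSystem T C₁ C₂ f g h) (ht : t ∈ Icc 0 T)
    {x' : Vec n} {X' Y' : ℝ → Vec n} (h₁ : IsFBSol T f g h t x X Y)
    (h₂ : IsFBSol T f g h t x' X' Y') {s : ℝ} (hs : s ∈ Icc t T) :
    ‖X s - X' s‖ + ‖Y s - Y' s‖ ≤ fbBound C₁ C₂ T * ‖x - x'‖ := by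
  have hsub : Icc t T ⊆ Icc 0 T := Icc_subset_Icc ht.1 le_rfl
  have hf₁ := continuousOn_comp_of_continuousOn_prod hA.f_cont ht.1 h₁.1 h₁.2.1
  have hf₂ := continuousOn_comp_of_continuousOn_prod hA.f_cont ht.1 h₂.1 h₂.2.1
  have hg₁ := continuousOn_comp_of_continuousOn_prod hA.g_cont ht.1 h₁.1 h₁.2.1
  have hg₂ := continuousOn_comp_of_continuousOn_prod hA.g_cont ht.1 h₂.1 h₂.2.1
  have hT₁ := h₁.backward_end ht.2
  have hT₂ := h₂.backward_end ht.2
  refine (norm_add_norm_le_of_forward_backward (m := 0) (P := fun r => X r - X' r)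
    (Q := fun r => Y r - Y' r) (F := fun r => f r (X r) (Y r) - f r (X' r) (Y' r))
    (G := fun r => g r (X r) (Y r) - g r (X' r) (Y' r)) hA.C₁_nonneg hA.C₂_pos le_rfl ht.2
    (by linarith [ht.1]) (h₁.1.sub h₂.1) (h₁.2.1.sub h₂.2.1) (hf₁.sub hf₂) (hg₁.sub hg₂)
    (fun s hs => ?_) (fun s hs => ?_) (fun r hr => ?_) ?_ (fun r hr => ?_) (fun r hr => ?_) ?_
    hs).trans_eq ?_
  · rw [integral_sub (hf₁.mono (uIcc_subset_Icc (left_mem_Icc.2 ht.2) hs)).intervalIntegrable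
      (hf₂.mono (uIcc_subset_Icc (left_mem_Icc.2 ht.2) hs)).intervalIntegrable,
      h₁.2.2.1 s hs, h₂.2.2.1 s hs, h₁.forward_start ht.2, h₂.forward_start ht.2]
    abel
  · rw [integral_sub (hg₁.mono (uIcc_subset_Icc hs (right_mem_Icc.2 ht.2))).intervalIntegrable
      (hg₂.mono (uIcc_subset_Icc hs (right_mem_Icc.2 ht.2))).intervalIntegrable,
      h₁.2.2.2 s hs, h₂.2.2.2 s hs, hT₁, hT₂]
    abel
  · have := hA.mono r (hsub hr) (X r) (X' r) (Y r) (Y' r)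
    rw [inner_neg_left, real_inner_comm] at this
    linarith
  · simpa [hT₁, hT₂, real_inner_comm] using hA.h_mono (X T) (X' T)
  · simpa using hA.f_lip r (hsub hr) (X r) (X' r) (Y r) (Y' r)
  · simpa using hA.g_lip r (hsub hr) (X r) (X' r) (Y r) (Y' r)
  · simpa [hT₁, hT₂] using hA.h_lip (X T) (X' T)
  · rw [zero_add, h₁.forward_start ht.2, h₂.forward_start ht.2]

theorem norm_sub_le (hA : IsMonotoneFBSystem T C₁ C₂ f g h) (ht : t ∈ Icc 0 T)
    {x' : Vec n} {X' Y' : ℝ → Vec n} (h₁ : IsFBSol T f g h t x X Y)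
    (h₂ : IsFBSol T f g h t x' X' Y') :
    ‖Y t - Y' t‖ ≤ fbBound C₁ C₂ T * ‖x - x'‖ := by
  linarith [norm_nonneg (X t - X' t), h₁.norm_sub_add_norm_sub_le hA ht h₂ (left_mem_Icc.2 ht.2)]

theorem norm_add_norm_le (hA : IsMonotoneFBSystem T C₁ C₂ f g h) (ht : t ∈ Icc 0 T)
    (hsol : IsFBSol T f g h t x X Y) {M : ℝ} (hM : 0 ≤ M)
    (hMf : ∀ r ∈ Icc 0 T, ‖f r 0 0‖ ≤ M) (hMg : ∀ r ∈ Icc 0 T, ‖g r 0 0‖ ≤ M) (hMh : ‖h 0‖ ≤ M)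
    {s : ℝ} (hs : s ∈ Icc t T) :
    ‖X s‖ + ‖Y s‖ ≤ fbBound C₁ C₂ T * (M + ‖x‖) := by
  have hsub : Icc t T ⊆ Icc 0 T := Icc_subset_Icc ht.1 le_rfl
  have hT := hsol.backward_end ht.2
  refine (norm_add_norm_le_of_forward_backward (m := M) (D := T) (F := fun r => f r (X r) (Y r))
    (G := fun r => g r (X r) (Y r)) hA.C₁_nonneg hA.C₂_pos hM ht.2 (by linarith [ht.1])
    hsol.1 hsol.2.1 (continuousOn_comp_of_continuousOn_prod hA.f_cont ht.1 hsol.1 hsol.2.1)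
    (continuousOn_comp_of_continuousOn_prod hA.g_cont ht.1 hsol.1 hsol.2.1)
    (fun s hs => by rw [hsol.forward_start ht.2]; exact hsol.2.2.1 s hs)
    (fun s hs => by rw [hT]; exact hsol.2.2.2 s hs) (fun r hr => ?_) ?_ (fun r hr => ?_)
    (fun r hr => ?_) ?_ hs).trans_eq (by rw [hsol.forward_start ht.2])
  · have hmono := hA.mono r (hsub hr) (X r) 0 (Y r) 0
    simp only [sub_zero, inner_neg_left, inner_sub_left] at hmono
    linarith [real_inner_comm (X r) (g r (X r) (Y r)),
      (abs_le.1 (abs_real_inner_le_mul_norm_of_norm_le (b := X r) (hMg r (hsub hr)))).1,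
      (abs_le.1 (abs_real_inner_le_mul_norm_of_norm_le (b := Y r) (hMf r (hsub hr)))).2]
  · have hmono := hA.h_mono (X T) 0
    simp only [sub_zero, inner_sub_left] at hmono
    rw [hT]
    linarith [real_inner_comm (X T) (h (X T)),
      (abs_le.1 (abs_real_inner_le_mul_norm_of_norm_le (b := X T) hMh)).1]
  · linarith [norm_le_norm_apply_zero_add (hA.f_lip r (hsub hr)) (X r) (Y r), hMf r (hsub hr)]
  · linarith [norm_le_norm_apply_zero_add (hA.g_lip r (hsub hr)) (X r) (Y r), hMg r (hsub hr)]
  · have hlip := hA.h_lip (X T) 0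
    rw [sub_zero] at hlip
    rw [hT]
    linarith [norm_le_norm_add_norm_sub' (h (X T)) (h 0)]

theorem norm_forward_sub_le (hsol : IsFBSol T f g h t x X Y) {B : ℝ}
    (hB : ∀ r ∈ Icc t T, ‖f r (X r) (Y r)‖ ≤ B) {t' : ℝ} (ht' : t' ∈ Icc t T) :
    ‖X t' - x‖ ≤ B * (t' - t) := by
  rw [hsol.2.2.1 t' ht', add_sub_cancel_left, ← abs_of_nonneg (sub_nonneg.2 ht'.1)]
  refine norm_integral_le_of_norm_le_const fun r hr => hB r ?_
  rw [uIoc_of_le ht'.1] at hr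
  exact ⟨hr.1.le, hr.2.trans ht'.2⟩

theorem norm_backward_sub_le (hsol : IsFBSol T f g h t x X Y)
    (hg : ContinuousOn (fun r => g r (X r) (Y r)) (Icc t T)) {B : ℝ}
    (hB : ∀ r ∈ Icc t T, ‖g r (X r) (Y r)‖ ≤ B) {t' : ℝ} (ht' : t' ∈ Icc t T) :
    ‖Y t - Y t'‖ ≤ B * (t' - t) := by
  have htT : t ≤ T := ht'.1.trans ht'.2
  have hsplit := integral_add_adjacent_intervals (μ := volume)
    (hg.mono (uIcc_subset_Icc (left_mem_Icc.2 htT) ht')).intervalIntegrable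
    (hg.mono (uIcc_subset_Icc ht' (right_mem_Icc.2 htT))).intervalIntegrable
  have hdiff : Y t - Y t' = ∫ r in t..t', g r (X r) (Y r) := by
    rw [hsol.2.2.2 t (left_mem_Icc.2 htT), hsol.2.2.2 t' ht', ← hsplit]
    abel
  rw [hdiff, ← abs_of_nonneg (sub_nonneg.2 ht'.1)]
  refine norm_integral_le_of_norm_le_const fun r hr => hB r ?_
  rw [uIoc_of_le ht'.1] at hr
  exact ⟨hr.1.le, hr.2.trans ht'.2⟩

end IsFBSol

section ValueFunction

variable {n : ℕ} {T C₁ C₂ M : ℝ} {f g : ℝ → Vec n → Vec n → Vec n} {h : Vec n → Vec n}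
  {X Y : ℝ → Vec n → ℝ → Vec n}

theorem norm_value_sub_le_of_le (hA : IsMonotoneFBSystem T C₁ C₂ f g h) (hM : 0 ≤ M)
    (hMf : ∀ r ∈ Icc 0 T, ‖f r 0 0‖ ≤ M) (hMg : ∀ r ∈ Icc 0 T, ‖g r 0 0‖ ≤ M) (hMh : ‖h 0‖ ≤ M)
    (hsol : ∀ t ∈ Icc (0:ℝ) T, ∀ x : Vec n, IsFBSol T f g h t x (X t x) (Y t x))
    (huniq : ∀ t ∈ Icc (0:ℝ) T, ∀ x : Vec n, ∀ X' Y' : ℝ → Vec n,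
      IsFBSol T f g h t x X' Y' → EqOn X' (X t x) (Icc t T) ∧ EqOn Y' (Y t x) (Icc t T))
    {t t' : ℝ} (ht : t ∈ Icc 0 T) (ht' : t' ∈ Icc t T) (x : Vec n) :
    ‖Y t x t - Y t' x t'‖
      ≤ (1 + fbBound C₁ C₂ T) * (M + C₁ * (fbBound C₁ C₂ T * (M + ‖x‖))) * (t' - t) := by
  set K := fbBound C₁ C₂ T
  set B := M + C₁ * (K * (M + ‖x‖))
  have hsub : Icc t T ⊆ Icc 0 T := Icc_subset_Icc ht.1 le_rfl
  have ht'0 : t' ∈ Icc 0 T := hsub ht'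
  have hsolx := hsol t ht x
  have hXY : ∀ r ∈ Icc t T, C₁ * (‖X t x r‖ + ‖Y t x r‖) ≤ C₁ * (K * (M + ‖x‖)) := fun r hr =>
    mul_le_mul_of_nonneg_left (hsolx.norm_add_norm_le hA ht hM hMf hMg hMh hr) hA.C₁_nonneg
  have hf : ContinuousOn (fun r => f r (X t x r) (Y t x r)) (Icc t T) :=
    continuousOn_comp_of_continuousOn_prod hA.f_cont ht.1 hsolx.1 hsolx.2.1
  have hg : ContinuousOn (fun r => g r (X t x r) (Y t x r)) (Icc t T) :=
    continuousOn_comp_of_continuousOn_prod hA.g_cont ht.1 hsolx.1 hsolx.2.1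
  have hf_le : ∀ r ∈ Icc t T, ‖f r (X t x r) (Y t x r)‖ ≤ B := fun r hr => by
    linarith [norm_le_norm_apply_zero_add (hA.f_lip r (hsub hr)) (X t x r) (Y t x r),
      hMf r (hsub hr), hXY r hr]
  have hg_le : ∀ r ∈ Icc t T, ‖g r (X t x r) (Y t x r)‖ ≤ B := fun r hr => by
    linarith [norm_le_norm_apply_zero_add (hA.g_lip r (hsub hr)) (X t x r) (Y t x r),
      hMg r (hsub hr), hXY r hr]
  have hflow : Y t x t' = Y t' (X t x t') t' :=
    (huniq t' ht'0 _ _ _ (hsolx.restrict hf ht')).2 (left_mem_Icc.2 ht'.2)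
  calc ‖Y t x t - Y t' x t'‖ ≤ ‖Y t x t - Y t x t'‖ + ‖Y t' (X t x t') t' - Y t' x t'‖ :=
        hflow ▸ norm_sub_le_norm_sub_add_norm_sub _ _ _
    _ ≤ B * (t' - t) + K * (B * (t' - t)) := by
        gcongr
        · exact hsolx.norm_backward_sub_le hg hg_le ht'
        · exact (hsol t' ht'0 _).norm_sub_le hA ht'0 (hsol t' ht'0 x) |>.trans
            (mul_le_mul_of_nonneg_left (hsolx.norm_forward_sub_le hf_le ht')
              (fbBound_nonneg hA.C₁_nonneg hA.C₂_pos (ht'0.1.trans ht'0.2)))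
    _ = (1 + K) * B * (t' - t) := by ring

theorem norm_value_sub_le (hA : IsMonotoneFBSystem T C₁ C₂ f g h) (hM : 0 ≤ M)
    (hMf : ∀ r ∈ Icc 0 T, ‖f r 0 0‖ ≤ M) (hMg : ∀ r ∈ Icc 0 T, ‖g r 0 0‖ ≤ M) (hMh : ‖h 0‖ ≤ M)
    (hsol : ∀ t ∈ Icc (0:ℝ) T, ∀ x : Vec n, IsFBSol T f g h t x (X t x) (Y t x))
    (huniq : ∀ t ∈ Icc (0:ℝ) T, ∀ x : Vec n, ∀ X' Y' : ℝ → Vec n,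
      IsFBSol T f g h t x X' Y' → EqOn X' (X t x) (Icc t T) ∧ EqOn Y' (Y t x) (Icc t T))
    {t t' : ℝ} (ht : t ∈ Icc 0 T) (ht' : t' ∈ Icc 0 T) (x : Vec n) :
    ‖Y t x t - Y t' x t'‖ ≤ (1 + fbBound C₁ C₂ T) * (M + C₁ * (fbBound C₁ C₂ T * (M + 1)))
      * (1 + ‖x‖) * |t - t'| := by
  have hK := fbBound_nonneg hA.C₁_nonneg hA.C₂_pos (ht.1.trans ht.2)
  have hB : (1 + fbBound C₁ C₂ T) * (M + C₁ * (fbBound C₁ C₂ T * (M + ‖x‖)))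
      ≤ (1 + fbBound C₁ C₂ T) * (M + C₁ * (fbBound C₁ C₂ T * (M + 1))) * (1 + ‖x‖) := by
    rw [mul_assoc]
    refine mul_le_mul_of_nonneg_left ?_ (by linarith)
    have hC₁K := mul_nonneg hA.C₁_nonneg hK
    nlinarith [mul_nonneg hM (norm_nonneg x), mul_nonneg (mul_nonneg hC₁K hM) (norm_nonneg x)]
  rcases le_total t t' with hle | hle
  · rw [abs_sub_comm, abs_of_nonneg (sub_nonneg.2 hle)]
    exact (norm_value_sub_le_of_le hA hM hMf hMg hMh hsol huniq ht ⟨hle, ht'.2⟩ x).trans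
      (mul_le_mul_of_nonneg_right hB (sub_nonneg.2 hle))
  · rw [norm_sub_rev, abs_of_nonneg (sub_nonneg.2 hle)]
    exact (norm_value_sub_le_of_le hA hM hMf hMg hMh hsol huniq ht' ⟨hle, ht.2⟩ x).trans
      (mul_le_mul_of_nonneg_right hB (sub_nonneg.2 hle))

end ValueFunction

theorem fbsde_value_function_regularity_general
    (n : ℕ) (T : ℝ) (hT : 0 < T)
    (f g : ℝ → Vec n → Vec n → Vec n) (h : Vec n → Vec n)
    (hf_cont : ContinuousOn (fun p : ℝ × Vec n × Vec n => f p.1 p.2.1 p.2.2)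
      (Icc 0 T ×ˢ (univ ×ˢ univ)))
    (hg_cont : ContinuousOn (fun p : ℝ × Vec n × Vec n => g p.1 p.2.1 p.2.2)
      (Icc 0 T ×ˢ (univ ×ˢ univ)))
    (C₁ : ℝ) (hC₁ : 0 < C₁)
    (hf_lip : ∀ t ∈ Icc (0:ℝ) T, ∀ x₁ x₂ y₁ y₂ : Vec n,
      ‖f t x₁ y₁ - f t x₂ y₂‖ ≤ C₁ * (‖x₁ - x₂‖ + ‖y₁ - y₂‖))
    (hg_lip : ∀ t ∈ Icc (0:ℝ) T, ∀ x₁ x₂ y₁ y₂ : Vec n,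
      ‖g t x₁ y₁ - g t x₂ y₂‖ ≤ C₁ * (‖x₁ - x₂‖ + ‖y₁ - y₂‖))
    (hh_lip : ∀ x₁ x₂ : Vec n, ‖h x₁ - h x₂‖ ≤ C₁ * ‖x₁ - x₂‖)
    (C₂ : ℝ) (hC₂ : 0 < C₂)
    (hmono : ∀ t ∈ Icc (0:ℝ) T, ∀ x₁ x₂ y₁ y₂ : Vec n,
      ⟪-(g t x₁ y₁ - g t x₂ y₂), x₁ - x₂⟫ + ⟪f t x₁ y₁ - f t x₂ y₂, y₁ - y₂⟫
        ≤ -C₂ * (‖x₁ - x₂‖ ^ 2 + ‖y₁ - y₂‖ ^ 2))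
    (hh_mono : ∀ x₁ x₂ : Vec n, C₂ * ‖x₁ - x₂‖ ^ 2 ≤ ⟪h x₁ - h x₂, x₁ - x₂⟫)
    (X Y : ℝ → Vec n → ℝ → Vec n)
    (hsol : ∀ t ∈ Icc (0:ℝ) T, ∀ x : Vec n, IsFBSol T f g h t x (X t x) (Y t x))
    (huniq : ∀ t ∈ Icc (0:ℝ) T, ∀ x : Vec n, ∀ X' Y' : ℝ → Vec n,
      IsFBSol T f g h t x X' Y' → EqOn X' (X t x) (Icc t T) ∧ EqOn Y' (Y t x) (Icc t T))
    : ∃ α : ℝ, 0 < α ∧ ∃ β : ℝ, 0 < β ∧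
      ∀ t ∈ Icc (0:ℝ) T, ∀ t' ∈ Icc (0:ℝ) T, ∀ x x' : Vec n,
        ‖Y t x t - Y t' x' t'‖ ^ 2 ≤ α * ‖x - x'‖ ^ 2 + β * (1 + ‖x‖ ^ 2) * |t - t'| := by
  have hA : IsMonotoneFBSystem T C₁ C₂ f g h :=
    ⟨hf_cont, hg_cont, hC₁.le, hf_lip, hg_lip, hh_lip, hC₂, hmono, hh_mono⟩
  obtain ⟨M, hM, hMf, hMg, hMh⟩ := hA.exists_bound_at_zero
  set K := fbBound C₁ C₂ T
  set A := (1 + K) * (M + C₁ * (K * (M + 1)))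
  refine ⟨2 * K ^ 2 + 1, by positivity, 4 * T * A ^ 2 + 1, by positivity,
    fun t ht t' ht' x x' => sq_le_of_le_mul_add_mul (norm_nonneg _) (abs_nonneg _)
      (abs_sub_le_of_nonneg_of_le ht.1 ht.2 ht'.1 ht'.2) ?_⟩
  have htime := norm_value_sub_le hA hM hMf hMg hMh hsol huniq ht ht' x
  have hspace := (hsol t' ht' x).norm_sub_le hA ht' (hsol t' ht' x')
  linarith [norm_sub_le_norm_sub_add_norm_sub (Y t x t) (Y t' x t') (Y t' x' t')]

/-- Regularity of the limit function `u(t,x) := Y^{t,x}(t)` (claim 3 of Theorem 2 of the paper):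
there are constants `α, β > 0` with
`‖u(t,x) − u(t',x')‖² ≤ α‖x−x'‖² + β(1+‖x‖²)|t−t'|` for all `t, t' ∈ [0,T]`, `x, x' ∈ ℝⁿ`;
in particular `u` is Lipschitz in `x` uniformly in `t` and uniformly continuous in `t`
on bounded sets of `x`. -/
theorem fbsde_value_function_regularity
    (n : ℕ) (hn : 1 ≤ n) (T : ℝ) (hT : 0 < T)
    (f g : ℝ → Vec n → Vec n → Vec n) (h : Vec n → Vec n)
    (hf_cont : ContinuousOn (fun p : ℝ × Vec n × Vec n => f p.1 p.2.1 p.2.2)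
      (Icc 0 T ×ˢ (univ ×ˢ univ)))
    (hg_cont : ContinuousOn (fun p : ℝ × Vec n × Vec n => g p.1 p.2.1 p.2.2)
      (Icc 0 T ×ˢ (univ ×ˢ univ)))
    (hh_cont : Continuous h)
    (C₁ : ℝ) (hC₁ : 0 < C₁)
    (hf_lip : ∀ t ∈ Icc (0:ℝ) T, ∀ x₁ x₂ y₁ y₂ : Vec n,
      ‖f t x₁ y₁ - f t x₂ y₂‖ ≤ C₁ * (‖x₁ - x₂‖ + ‖y₁ - y₂‖))
    (hg_lip : ∀ t ∈ Icc (0:ℝ) T, ∀ x₁ x₂ y₁ y₂ : Vec n,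
      ‖g t x₁ y₁ - g t x₂ y₂‖ ≤ C₁ * (‖x₁ - x₂‖ + ‖y₁ - y₂‖))
    (hh_lip : ∀ x₁ x₂ : Vec n, ‖h x₁ - h x₂‖ ≤ C₁ * ‖x₁ - x₂‖)
    (C₂ : ℝ) (hC₂ : 0 < C₂)
    (hmono : ∀ t ∈ Icc (0:ℝ) T, ∀ x₁ x₂ y₁ y₂ : Vec n,
      ⟪-(g t x₁ y₁ - g t x₂ y₂), x₁ - x₂⟫ + ⟪f t x₁ y₁ - f t x₂ y₂, y₁ - y₂⟫
        ≤ -C₂ * (‖x₁ - x₂‖ ^ 2 + ‖y₁ - y₂‖ ^ 2))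
    (hh_mono : ∀ x₁ x₂ : Vec n, C₂ * ‖x₁ - x₂‖ ^ 2 ≤ ⟪h x₁ - h x₂, x₁ - x₂⟫)
    (X Y : ℝ → Vec n → ℝ → Vec n)
    (hsol : ∀ t ∈ Icc (0:ℝ) T, ∀ x : Vec n, IsFBSol T f g h t x (X t x) (Y t x))
    (huniq : ∀ t ∈ Icc (0:ℝ) T, ∀ x : Vec n, ∀ X' Y' : ℝ → Vec n,
      IsFBSol T f g h t x X' Y' → EqOn X' (X t x) (Icc t T) ∧ EqOn Y' (Y t x) (Icc t T))
    : ∃ α : ℝ, 0 < α ∧ ∃ β : ℝ, 0 < β ∧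
      ∀ t ∈ Icc (0:ℝ) T, ∀ t' ∈ Icc (0:ℝ) T, ∀ x x' : Vec n,
        ‖Y t x t - Y t' x' t'‖ ^ 2 ≤ α * ‖x - x'‖ ^ 2 + β * (1 + ‖x‖ ^ 2) * |t - t'| :=
  fbsde_value_function_regularity_general n T hT f g h hf_cont hg_cont C₁ hC₁ hf_lip hg_lip hh_lip
    C₂ hC₂ hmono hh_mono X Y hsol huniq
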